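/- arXiv:1811.10308 — 6 statements merged into one kernel-verified Lean document; each statement's English description precedes it below -/
import Mathlib

section
/- Let M ≥ 2, ρ ∈ ℝ with 1 + (M−1)ρ > 0, κ ≥ 0, η > 0, ϱ > 0, and set δ = M(1 + (M−1)ρ) and a = √(Mκ/(1 + (M−1)ρ)). Let ς_1,…,ς_{2(M−1)}, ω_1, ω_2 be independent standard Gaussian random variables, and define ξ⁰_SA = (ηϱ/(2M(1+κ)))·[(1−ρ)·Σ_{i=1}^{2(M−1)} ς_i² + (1+(M−1)ρ)·Σ_{i=1}^{2} (ω_i + a)²]. Then E[ξ⁰_SA] = ηϱ and Var[ξ⁰_SA] = (ηϱ)²·((M + 2κδ)M² − 2δM(1+κ) + δ²)/(M³(M−1)(1+κ)²). -/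
/-! Each summand of `ξ` is `c k * (g k + b k) ^ 2`, where the `g k + b k` are independent
Gaussians of mean `b k` and variance `1`, so the mean and the variance of `ξ` are sums over `k`.
For `X ~ N(μ, v)` write `X = Z + μ` with `Z ~ N(0, v)`: the odd moments of `Z` vanish by symmetry
and `E Z ^ 2 = v`, `E Z ^ 4 = 3 v ^ 2` come from `Γ(k + 1/2)`, whence `E X ^ 2 = μ ^ 2 + v` and
`Var (X ^ 2) = 2 v ^ 2 + 4 μ ^ 2 v`. What remains is algebra with
`a ^ 2 = M κ / (1 + (M - 1) ρ)`. -/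

open MeasureTheory ProbabilityTheory Finset Real
open scoped Nat NNReal

lemma integrable_pow_gaussianReal (μ : ℝ) (v : ℝ≥0) (n : ℕ) :
    Integrable (fun x ↦ x ^ n) (gaussianReal μ v) :=
  (memLp_id_gaussianReal n).integrable_norm_pow'.mono' (by fun_prop)
    (ae_of_all _ fun x ↦ by simp [norm_pow])

lemma integral_pow_two_mul_add_one_gaussianReal_zero (v : ℝ≥0) (k : ℕ) :
    ∫ x, x ^ (2 * k + 1) ∂gaussianReal 0 v = 0 := by
  have h : ∫ x, x ^ (2 * k + 1) ∂(gaussianReal 0 v).map (fun x ↦ -x)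
      = ∫ x, (-x) ^ (2 * k + 1) ∂gaussianReal 0 v :=
    integral_map (by fun_prop) (by fun_prop)
  simp only [gaussianReal_map_neg, neg_zero, (odd_two_mul_add_one k).neg_pow,
    integral_neg] at h
  linarith

lemma integral_pow_two_mul_exp_neg_half_mul_sq_Ioi (k : ℕ) :
    ∫ x in Set.Ioi (0 : ℝ), x ^ (2 * k) * exp (-(1 / 2) * x ^ 2)
      = 2 ^ k * √2 * Gamma (k + 1 / 2) / 2 := by
  have h := integral_rpow_mul_exp_neg_mul_rpow (p := 2) (q := (2 * k : ℕ)) (b := 1 / 2) two_pos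
    (by linarith [(2 * k : ℕ).cast_nonneg (α := ℝ)]) (by norm_num)
  have hexp : (1 / 2 : ℝ) ^ (-((2 * k : ℕ) + 1 : ℝ) / 2) = 2 ^ k * √2 := by
    rw [one_div, inv_rpow zero_le_two, ← rpow_neg zero_le_two, Real.sqrt_eq_rpow,
      ← Real.rpow_natCast, ← rpow_add two_pos]
    push_cast; ring_nf
  rw [hexp, show (((2 * k : ℕ) : ℝ) + 1) / 2 = k + 1 / 2 by push_cast; ring] at h
  have hcongr : ∫ x in Set.Ioi (0 : ℝ), x ^ (2 * k) * exp (-(1 / 2) * x ^ 2)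
      = ∫ x in Set.Ioi (0 : ℝ), x ^ ((2 * k : ℕ) : ℝ) * exp (-(1 / 2) * x ^ (2 : ℝ)) :=
    setIntegral_congr_fun measurableSet_Ioi fun x _ ↦ by
      rw [Real.rpow_natCast, Real.rpow_two]
  rw [hcongr, h]
  ring

lemma integral_pow_two_mul_gaussianReal_zero_one (k : ℕ) :
    ∫ x, x ^ (2 * k) ∂gaussianReal 0 1 = (2 * k - 1 : ℕ)‼ := by
  have hpdf (x : ℝ) : gaussianPDFReal 0 1 x = (√(2 * π))⁻¹ * exp (-(1 / 2) * x ^ 2) := by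
    rw [gaussianPDFReal]
    simp only [NNReal.coe_one, mul_one, sub_zero]
    ring_nf
  have heven : ∫ x, x ^ (2 * k) * exp (-(1 / 2) * x ^ 2)
      = 2 * ∫ x in Set.Ioi 0, x ^ (2 * k) * exp (-(1 / 2) * x ^ 2) := by
    rw [← integral_comp_abs (f := fun x ↦ x ^ (2 * k) * exp (-(1 / 2) * x ^ 2))]
    simp [pow_mul]
  rw [integral_gaussianReal_eq_integral_smul one_ne_zero]
  simp_rw [smul_eq_mul, hpdf, mul_assoc, mul_comm (exp _)]
  rw [integral_const_mul, heven, integral_pow_two_mul_exp_neg_half_mul_sq_Ioi,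
    Gamma_nat_add_half, sqrt_mul zero_le_two]
  field_simp

lemma gaussianReal_zero_eq_map_const_mul (v : ℝ≥0) :
    gaussianReal 0 v = (gaussianReal 0 1).map (fun x ↦ √(v : ℝ) * x) := by
  rw [gaussianReal_map_const_mul, mul_zero, mul_one]
  congr
  ext
  simp

lemma integral_pow_two_mul_gaussianReal_zero (v : ℝ≥0) (k : ℕ) :
    ∫ x, x ^ (2 * k) ∂gaussianReal 0 v = v ^ k * (2 * k - 1 : ℕ)‼ := by
  rw [gaussianReal_zero_eq_map_const_mul, integral_map (by fun_prop) (by fun_prop)]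
  simp_rw [mul_pow]
  rw [integral_const_mul, integral_pow_two_mul_gaussianReal_zero_one, pow_mul,
    sq_sqrt v.coe_nonneg]

lemma integral_pow_gaussianReal (μ : ℝ) (v : ℝ≥0) (n : ℕ) :
    ∫ x, x ^ n ∂gaussianReal μ v
      = ∑ m ∈ range (n + 1),
          (∫ x, x ^ m ∂gaussianReal 0 v) * μ ^ (n - m) * n.choose m := by
  have hshift : gaussianReal μ v = (gaussianReal 0 v).map (· + μ) := by
    rw [gaussianReal_map_add_const, zero_add]
  rw [hshift, integral_map (by fun_prop) (by fun_prop)]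
  simp_rw [add_pow]
  rw [integral_finsetSum _ fun m _ ↦
    ((integrable_pow_gaussianReal 0 v m).mul_const _).mul_const _]
  simp_rw [integral_mul_const]

lemma integral_sq_gaussianReal (μ : ℝ) (v : ℝ≥0) :
    ∫ x, x ^ 2 ∂gaussianReal μ v = μ ^ 2 + v := by
  have h2 := integral_pow_two_mul_gaussianReal_zero v 1
  simp only [mul_one] at h2
  rw [integral_pow_gaussianReal]
  simp [sum_range_succ, integral_id_gaussianReal, h2]

lemma integral_pow_four_gaussianReal (μ : ℝ) (v : ℝ≥0) :
    ∫ x, x ^ 4 ∂gaussianReal μ v = μ ^ 4 + 6 * μ ^ 2 * v + 3 * v ^ 2 := by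
  have h2 := integral_pow_two_mul_gaussianReal_zero v 1
  have h3 := integral_pow_two_mul_add_one_gaussianReal_zero v 1
  have h4 := integral_pow_two_mul_gaussianReal_zero v 2
  norm_num at h2 h3 h4
  rw [integral_pow_gaussianReal]
  simp [sum_range_succ, integral_id_gaussianReal, h2, h3, h4, Nat.choose]
  ring

section RandomVariable

variable {Ω : Type*} [MeasurableSpace Ω] {P : Measure Ω}

lemma memLp_sq_of_hasLaw_gaussianReal {X : Ω → ℝ} {μ : ℝ} {v : ℝ≥0}
    (hX : HasLaw X (gaussianReal μ v) P) :
    MemLp (fun ω ↦ X ω ^ 2) 2 P := by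
  have h : MemLp (fun x : ℝ ↦ x ^ 2) 2 (gaussianReal μ v) :=
    (memLp_two_iff_integrable_sq (by fun_prop)).2
      (by simpa [← pow_mul] using integrable_pow_gaussianReal μ v 4)
  rw [← hX.map_eq] at h
  exact h.comp_of_map hX.aemeasurable

lemma integral_sq_of_hasLaw_gaussianReal {X : Ω → ℝ} {μ : ℝ} {v : ℝ≥0}
    (hX : HasLaw X (gaussianReal μ v) P) :
    ∫ ω, X ω ^ 2 ∂P = μ ^ 2 + v := by
  rw [← integral_sq_gaussianReal]
  exact hX.integral_comp (f := fun x ↦ x ^ 2) (by fun_prop)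

lemma variance_sq_of_hasLaw_gaussianReal {X : Ω → ℝ} {μ : ℝ} {v : ℝ≥0}
    (hX : HasLaw X (gaussianReal μ v) P) :
    Var[fun ω ↦ X ω ^ 2; P] = 2 * v ^ 2 + 4 * μ ^ 2 * v := by
  have := hX.isProbabilityMeasure
  have h4 : ∫ ω, X ω ^ 4 ∂P = μ ^ 4 + 6 * μ ^ 2 * v + 3 * v ^ 2 := by
    rw [← integral_pow_four_gaussianReal]
    exact hX.integral_comp (f := fun x ↦ x ^ 4) (by fun_prop)
  rw [variance_eq_sub (memLp_sq_of_hasLaw_gaussianReal hX)]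
  simp only [Pi.pow_apply, ← pow_mul]
  rw [h4, integral_sq_of_hasLaw_gaussianReal hX]
  ring

lemma integral_sum_mul_sq_of_hasLaw_gaussianReal {ι : Type*} [Fintype ι] {X : ι → Ω → ℝ}
    {μ : ι → ℝ} {v : ι → ℝ≥0} (c : ι → ℝ)
    (hX : ∀ i, HasLaw (X i) (gaussianReal (μ i) (v i)) P) :
    ∫ ω, ∑ i, c i * X i ω ^ 2 ∂P = ∑ i, c i * (μ i ^ 2 + v i) := by
  rw [integral_finsetSum _ fun i _ ↦ by
    have := (hX i).isProbabilityMeasure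
    exact ((memLp_sq_of_hasLaw_gaussianReal (hX i)).integrable one_le_two).const_mul (c i)]
  simp_rw [integral_const_mul, integral_sq_of_hasLaw_gaussianReal (hX _)]

lemma variance_sum_mul_sq_of_hasLaw_gaussianReal {ι : Type*} [Fintype ι] {X : ι → Ω → ℝ}
    {μ : ι → ℝ} {v : ι → ℝ≥0} (c : ι → ℝ)
    (hX : ∀ i, HasLaw (X i) (gaussianReal (μ i) (v i)) P) (hind : iIndepFun X P) :
    Var[fun ω ↦ ∑ i, c i * X i ω ^ 2; P]
      = ∑ i, c i ^ 2 * (2 * v i ^ 2 + 4 * μ i ^ 2 * v i) := by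
  set Y : ι → Ω → ℝ := fun i ω ↦ c i * X i ω ^ 2
  have hY : iIndepFun Y P := hind.comp (fun i x ↦ c i * x ^ 2) fun i ↦ by fun_prop
  rw [← Finset.sum_fn, IndepFun.variance_sum
    (fun i _ ↦ (memLp_sq_of_hasLaw_gaussianReal (hX i)).const_mul (c i))
    fun i _ j _ hij ↦ hY.indepFun hij]
  simp_rw [variance_const_mul, variance_sq_of_hasLaw_gaussianReal (hX _)]

end RandomVariable

theorem SA_mean_and_variance_general {Ω : Type*} [MeasurableSpace Ω]
    (P : Measure Ω)
    (M : ℕ) (hM : 2 ≤ M) (ρ κ : ℝ) (hρ : 0 < 1 + ((M : ℝ) - 1) * ρ) (hκ : 0 ≤ κ)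
    (η ϱ δ a : ℝ)
    (hδ : δ = (M : ℝ) * (1 + ((M : ℝ) - 1) * ρ))
    (ha : a = Real.sqrt ((M : ℝ) * κ / (1 + ((M : ℝ) - 1) * ρ)))
    (g : (Fin (2 * (M - 1)) ⊕ Fin 2) → Ω → ℝ)
    (hindep : iIndepFun g P)
    (hgauss : ∀ k, P.map (g k) = gaussianReal 0 1)
    (ξ : Ω → ℝ)
    (hξ : ∀ ω, ξ ω = (η * ϱ / (2 * M * (1 + κ)))
      * ((1 - ρ) * ∑ i : Fin (2 * (M - 1)), (g (Sum.inl i) ω) ^ 2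
        + (1 + ((M : ℝ) - 1) * ρ) * ∑ i : Fin 2, (g (Sum.inr i) ω + a) ^ 2)) :
    ∫ ω, ξ ω ∂P = η * ϱ ∧
    variance ξ P = (η * ϱ) ^ 2
      * (((M : ℝ) + 2 * κ * δ) * (M : ℝ) ^ 2 - 2 * δ * M * (1 + κ) + δ ^ 2)
      / ((M : ℝ) ^ 3 * ((M : ℝ) - 1) * (1 + κ) ^ 2) := by
  set t := 1 + ((M : ℝ) - 1) * ρ
  set s := η * ϱ / (2 * M * (1 + κ))
  let b : Fin (2 * (M - 1)) ⊕ Fin 2 → ℝ := Sum.elim 0 fun _ ↦ a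
  let c : Fin (2 * (M - 1)) ⊕ Fin 2 → ℝ := Sum.elim (fun _ ↦ s * (1 - ρ)) fun _ ↦ s * t
  have hlaw (k) : HasLaw (fun ω ↦ g k ω + b k) (gaussianReal (b k) 1) P := by
    simpa using gaussianReal_add_const
      ⟨.of_map_ne_zero (by simp [hgauss k, IsProbabilityMeasure.ne_zero]), hgauss k⟩ (b k)
  have hind : iIndepFun (fun k ω ↦ g k ω + b k) P :=
    hindep.comp (fun k x ↦ x + b k) fun k ↦ by fun_prop
  have hξ_eq : ξ = fun ω ↦ ∑ k, c k * (g k ω + b k) ^ 2 := by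
    funext ω
    rw [hξ, Fintype.sum_sum_type]
    simp only [c, b, Sum.elim_inl, Sum.elim_inr, Pi.zero_apply, add_zero, mul_add, mul_sum,
      mul_assoc]
  have ha2 : a ^ 2 = M * κ / t := by rw [ha, sq_sqrt (by positivity)]
  have hcard : ((2 * (M - 1) : ℕ) : ℝ) = 2 * (M - 1) := by
    push_cast [Nat.cast_sub (by omega : 1 ≤ M)]; ring
  have hM1 : (M : ℝ) - 1 ≠ 0 := by
    have : (2 : ℝ) ≤ M := by exact_mod_cast hM
    linarith
  have hκ1 : 1 + κ ≠ 0 := by linarith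
  rw [hξ_eq, integral_sum_mul_sq_of_hasLaw_gaussianReal c hlaw,
    variance_sum_mul_sq_of_hasLaw_gaussianReal c hlaw hind]
  simp [Fintype.sum_sum_type, c, b, hcard, ha2, hδ, s]
  constructor <;> field_simp <;> ring

/-- With `M ≥ 2`, uniform correlation coefficient `ρ` satisfying
`1 + (M−1)ρ > 0`, Rician factor `κ ≥ 0`, `δ = M(1 + (M−1)ρ)` and
`a = √(Mκ/(1 + (M−1)ρ))`, and `ς_1,…,ς_{2(M−1)}, ω_1, ω_2` independent standard
Gaussians, the Switching-Antennas harvested energy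
`ξ⁰_SA = (ηϱ/(2M(1+κ)))[(1−ρ) Σ ς_i² + (1+(M−1)ρ) Σ (ω_i + a)²]`
has mean `ηϱ` and variance
`(ηϱ)²((M + 2κδ)M² − 2δM(1+κ) + δ²)/(M³(M−1)(1+κ)²)`. -/
theorem SA_mean_and_variance {Ω : Type*} [MeasurableSpace Ω]
    (P : Measure Ω) [IsProbabilityMeasure P]
    (M : ℕ) (hM : 2 ≤ M) (ρ κ : ℝ) (hρ : 0 < 1 + ((M : ℝ) - 1) * ρ) (hκ : 0 ≤ κ)
    (η ϱ δ a : ℝ) (hη : 0 < η) (hϱ : 0 < ϱ)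
    (hδ : δ = (M : ℝ) * (1 + ((M : ℝ) - 1) * ρ))
    (ha : a = Real.sqrt ((M : ℝ) * κ / (1 + ((M : ℝ) - 1) * ρ)))
    (g : (Fin (2 * (M - 1)) ⊕ Fin 2) → Ω → ℝ)
    (hmeas : ∀ k, Measurable (g k))
    (hindep : iIndepFun g P)
    (hgauss : ∀ k, P.map (g k) = gaussianReal 0 1)
    (ξ : Ω → ℝ)
    (hξ : ∀ ω, ξ ω = (η * ϱ / (2 * M * (1 + κ)))
      * ((1 - ρ) * ∑ i : Fin (2 * (M - 1)), (g (Sum.inl i) ω) ^ 2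
        + (1 + ((M : ℝ) - 1) * ρ) * ∑ i : Fin 2, (g (Sum.inr i) ω + a) ^ 2)) :
    ∫ ω, ξ ω ∂P = η * ϱ ∧
    variance ξ P = (η * ϱ) ^ 2
      * (((M : ℝ) + 2 * κ * δ) * (M : ℝ) ^ 2 - 2 * δ * M * (1 + κ) + δ ^ 2)
      / ((M : ℝ) ^ 3 * ((M : ℝ) - 1) * (1 + κ) ^ 2) :=
  SA_mean_and_variance_general P M hM ρ κ hρ hκ η ϱ δ a hδ ha g hindep hgauss ξ hξ
end

section
/- Let η > 0, 0 ≤ ϖ₁ < ϖ₂, and define g: ℝ → ℝ by g(x) = 0 for x < ϖ₁, g(x) = ηx for ϖ₁ ≤ x < ϖ₂, and g(x) = ηϖ₂ for x ≥ ϖ₂. Let φ > 0, ϕ > 0, and let Z₁ be a random variable with the central chi-squared distribution with φ degrees of freedom, i.e., with density f(z) = (1/(2Γ(φ/2)))·(z/2)^{φ/2−1}·e^{−z/2} on z ≥ 0. Then E[g(ϕZ₁)] = (2η/Γ(φ/2))·(ϕ·Γ(1+φ/2, ϖ₁/(2ϕ)) − ϕ·Γ(1+φ/2, ϖ₂/(2ϕ))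 + (ϖ₂/2)·Γ(φ/2, ϖ₂/(2ϕ))), where Γ(a, x) = ∫_x^∞ t^{a−1} e^{−t} dt is the upper incomplete gamma function and Γ(a) = Γ(a, 0) is the gamma function. -/
open MeasureTheory Real

/-- The upper incomplete gamma function `Γ(a, x) = ∫_x^∞ t^{a−1} e^{−t} dt`. -/
noncomputable def upperGamma (a x : ℝ) : ℝ :=
  ∫ t in Set.Ioi x, t ^ (a - 1) * Real.exp (-t)

/-- Integrability of the upper incomplete gamma integrand. -/
lemma ug_integrableOn {r : ℝ} (hr : 0 < r) {x : ℝ} (hx : 0 ≤ x) :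
    IntegrableOn (fun t : ℝ => t ^ (r - 1) * Real.exp (-t)) (Set.Ioi x) := by
  refine (((Real.GammaIntegral_convergent hr).mono_set
      (Set.Ioi_subset_Ioi hx)).congr_fun ?_ measurableSet_Ioi)
  intro t _
  exact mul_comm _ _

/-- Splitting the upper incomplete gamma function at a point. -/
lemma upperGamma_split {r : ℝ} (hr : 0 < r) {x y : ℝ} (hx : 0 ≤ x) (hxy : x ≤ y) :
    upperGamma r x = (∫ t in Set.Ioc x y, t ^ (r - 1) * Real.exp (-t)) + upperGamma r y := by
  unfold upperGamma
  rw [← MeasureTheory.setIntegral_union]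
  · rw [Set.Ioc_union_Ioi_eq_Ioi hxy]
  · rw [Set.disjoint_left]
    rintro t ⟨_, ht⟩ ht'
    exact absurd (Set.mem_Ioi.mp ht') (not_lt.mpr ht)
  · exact measurableSet_Ioi
  · exact ((ug_integrableOn hr hx).mono_set Set.Ioc_subset_Ioi_self)
  · exact ug_integrableOn hr (hx.trans hxy)

/-- With `g` the sensitivity/saturation EH transfer function and `Z₁`
central chi-squared with `φ` degrees of freedom (density
`(1/(2Γ(φ/2)))(z/2)^{φ/2−1}e^{−z/2}` on `z ≥ 0`), for `ϕ > 0`,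
`E[g(ϕZ₁)] = (2η/Γ(φ/2))(ϕΓ(1+φ/2, ϖ₁/(2ϕ)) − ϕΓ(1+φ/2, ϖ₂/(2ϕ)) + (ϖ₂/2)Γ(φ/2, ϖ₂/(2ϕ)))`. -/
theorem mean_g_chiSquared (η ϖ₁ ϖ₂ : ℝ) (hη : 0 < η) (h1 : 0 ≤ ϖ₁) (h12 : ϖ₁ < ϖ₂)
    (g : ℝ → ℝ)
    (hg : ∀ x, g x = if x < ϖ₁ then 0 else if x < ϖ₂ then η * x else η * ϖ₂)
    (φ ϕ : ℝ) (hφ : 0 < φ) (hϕ : 0 < ϕ) :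
    ∫ z in Set.Ioi (0 : ℝ),
        g (ϕ * z) * (1 / (2 * Real.Gamma (φ / 2)) * (z / 2) ^ (φ / 2 - 1) * Real.exp (-z / 2))
      = (2 * η / Real.Gamma (φ / 2))
        * (ϕ * upperGamma (1 + φ / 2) (ϖ₁ / (2 * ϕ))
          - ϕ * upperGamma (1 + φ / 2) (ϖ₂ / (2 * ϕ))
          + (ϖ₂ / 2) * upperGamma (φ / 2) (ϖ₂ / (2 * ϕ))) := by
  have h2 : 0 < ϖ₂ := h1.trans_lt h12
  set s : ℝ := φ / 2 with hs_def
  have hs : 0 < s := by positivity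
  set a : ℝ := ϖ₁ / (2 * ϕ) with ha_def
  set b : ℝ := ϖ₂ / (2 * ϕ) with hb_def
  have ha : 0 ≤ a := by positivity
  have hb : 0 < b := by positivity
  have hab : a < b := by
    apply div_lt_div_of_pos_right h12
    positivity
  -- bounds for g
  have hg_nonneg : ∀ x, 0 ≤ g x := by
    intro x
    rw [hg x]
    split_ifs with h h'
    · exact le_refl 0
    · have hx0 : 0 ≤ x := le_trans h1 (not_lt.mp h)
      positivity
    · positivity
  have hg_le : ∀ x, g x ≤ η * ϖ₂ := by
    intro x
    rw [hg x]
    split_ifs with h h'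
    · positivity
    · exact mul_le_mul_of_nonneg_left h'.le hη.le
    · exact le_refl _
  -- measurability of g
  have hg_meas : Measurable g := by
    have hfe : g = fun x => if x < ϖ₁ then 0 else if x < ϖ₂ then η * x else η * ϖ₂ :=
      funext hg
    rw [hfe]
    apply Measurable.ite (measurableSet_lt measurable_id measurable_const) measurable_const
    exact Measurable.ite (measurableSet_lt measurable_id measurable_const)
      (measurable_const.mul measurable_id) measurable_const
  -- the kernel after change of variables
  set K : ℝ → ℝ := fun t => g (ϕ * (2 * t)) * (t ^ (s - 1) * Real.exp (-t)) with hK_def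
  -- Step 1: pull the constant out and change variables z = 2t
  have step1 : (∫ z in Set.Ioi (0 : ℝ),
      g (ϕ * z) * (1 / (2 * Real.Gamma s) * (z / 2) ^ (s - 1) * Real.exp (-z / 2)))
      = 1 / (2 * Real.Gamma s) * (2 * ∫ t in Set.Ioi (0 : ℝ), K t) := by
    have e1 : ∀ z : ℝ, g (ϕ * z) * (1 / (2 * Real.Gamma s) * (z / 2) ^ (s - 1)
        * Real.exp (-z / 2))
        = 1 / (2 * Real.Gamma s) * (g (ϕ * z) * ((z / 2) ^ (s - 1) * Real.exp (-z / 2))) := by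
      intro z; ring
    simp_rw [e1]
    rw [MeasureTheory.integral_const_mul]
    congr 1
    have hcv := MeasureTheory.integral_comp_mul_left_Ioi
      (fun z => g (ϕ * z) * ((z / 2) ^ (s - 1) * Real.exp (-z / 2))) 0 (by norm_num : (0:ℝ) < 2)
    rw [mul_zero, smul_eq_mul] at hcv
    have e2 : ∀ t : ℝ, g (ϕ * (2 * t)) * ((2 * t / 2) ^ (s - 1) * Real.exp (-(2 * t) / 2))
        = K t := by
      intro t
      have ht1 : (2 * t / 2 : ℝ) = t := by ring
      have ht2 : (-(2 * t) / 2 : ℝ) = -t := by ring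
      rw [hK_def, ht1, ht2]
    simp_rw [e2] at hcv
    linarith [hcv]
  -- integrability of K on Ioi 0
  have hK_int : IntegrableOn K (Set.Ioi (0:ℝ)) := by
    have hmaj : IntegrableOn (fun t : ℝ => η * ϖ₂ * (t ^ (s - 1) * Real.exp (-t)))
        (Set.Ioi (0:ℝ)) := (ug_integrableOn hs le_rfl).const_mul _
    refine Integrable.mono hmaj ?_ ?_
    · apply Measurable.aestronglyMeasurable
      apply Measurable.mul
      · exact hg_meas.comp (measurable_const.mul (measurable_const.mul measurable_id))
      · apply Measurable.mul
        · exact (measurable_id.pow_const _)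
        · exact (measurable_id.neg.exp)
    · filter_upwards [MeasureTheory.ae_restrict_mem measurableSet_Ioi] with t ht
      have ht0 : (0:ℝ) < t := ht
      have hfac : 0 ≤ t ^ (s - 1) * Real.exp (-t) :=
        mul_nonneg (Real.rpow_nonneg ht0.le _) (Real.exp_nonneg _)
      show ‖g (ϕ * (2 * t)) * (t ^ (s - 1) * Real.exp (-t))‖
          ≤ ‖η * ϖ₂ * (t ^ (s - 1) * Real.exp (-t))‖
      rw [Real.norm_eq_abs, Real.norm_eq_abs,
        abs_of_nonneg (mul_nonneg (by positivity : (0:ℝ) ≤ η * ϖ₂) hfac),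
        abs_of_nonneg (mul_nonneg (hg_nonneg _) hfac)]
      exact mul_le_mul_of_nonneg_right (hg_le _) hfac
  -- splitting the integral
  have hsplit : (∫ t in Set.Ioi (0:ℝ), K t)
      = (∫ t in Set.Ioc (0:ℝ) a, K t) + (∫ t in Set.Ioc a b, K t)
        + (∫ t in Set.Ioi b, K t) := by
    have h1' : (∫ t in Set.Ioi (0:ℝ), K t)
        = (∫ t in Set.Ioc (0:ℝ) b, K t) + (∫ t in Set.Ioi b, K t) := by
      rw [← MeasureTheory.setIntegral_union]
      · rw [Set.Ioc_union_Ioi_eq_Ioi hb.le]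
      · rw [Set.disjoint_left]; rintro t ⟨_, ht⟩ ht'
        exact absurd (Set.mem_Ioi.mp ht') (not_lt.mpr ht)
      · exact measurableSet_Ioi
      · exact hK_int.mono_set Set.Ioc_subset_Ioi_self
      · exact hK_int.mono_set (Set.Ioi_subset_Ioi hb.le)
    have h2' : (∫ t in Set.Ioc (0:ℝ) b, K t)
        = (∫ t in Set.Ioc (0:ℝ) a, K t) + (∫ t in Set.Ioc a b, K t) := by
      rw [← MeasureTheory.setIntegral_union]
      · rw [Set.Ioc_union_Ioc_eq_Ioc ha hab.le]
      · rw [Set.disjoint_left]; rintro t ⟨_, ht⟩ ⟨ht', _⟩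
        exact absurd ht' (not_lt.mpr ht)
      · exact measurableSet_Ioc
      · exact hK_int.mono_set Set.Ioc_subset_Ioi_self
      · exact hK_int.mono_set ((Set.Ioc_subset_Ioc_left ha).trans Set.Ioc_subset_Ioi_self)
    rw [h1', h2']
  -- piece 1: zero
  have hp1 : (∫ t in Set.Ioc (0:ℝ) a, K t) = 0 := by
    rw [MeasureTheory.integral_Ioc_eq_integral_Ioo]
    apply MeasureTheory.setIntegral_eq_zero_of_forall_eq_zero
    intro t ht
    have hlt : ϕ * (2 * t) < ϖ₁ := by
      have h' : t < a := ht.2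
      rw [ha_def] at h'
      calc ϕ * (2 * t) < ϕ * (2 * (ϖ₁ / (2 * ϕ))) := by
            apply mul_lt_mul_of_pos_left _ hϕ
            exact mul_lt_mul_of_pos_left h' (by norm_num)
        _ = ϖ₁ := by field_simp
    show g (ϕ * (2 * t)) * (t ^ (s - 1) * Real.exp (-t)) = 0
    rw [hg (ϕ * (2 * t)), if_pos hlt, zero_mul]
  -- piece 2: middle
  have hp2 : (∫ t in Set.Ioc a b, K t)
      = 2 * η * ϕ * (upperGamma (s + 1) a - upperGamma (s + 1) b) := by
    have key : ∀ t : ℝ, 0 < t →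
        η * (ϕ * (2 * t)) * (t ^ (s - 1) * Real.exp (-t))
        = 2 * η * ϕ * (t ^ ((s + 1) - 1) * Real.exp (-t)) := by
      intro t ht
      have hpow : t ^ ((s + 1) - 1) = t ^ (s - 1) * t := by
        have he : ((s + 1) - 1 : ℝ) = (s - 1) + 1 := by ring
        rw [he, Real.rpow_add_one ht.ne']
      rw [hpow]; ring
    have hcongr : (∫ t in Set.Ioc a b, K t)
        = ∫ t in Set.Ioc a b, 2 * η * ϕ * (t ^ ((s + 1) - 1) * Real.exp (-t)) := by
      apply MeasureTheory.setIntegral_congr_fun measurableSet_Ioc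
      intro t ht
      have ht0 : (0:ℝ) < t := lt_of_le_of_lt ha ht.1
      have hge : ϖ₁ ≤ ϕ * (2 * t) := by
        have hta : a ≤ t := ht.1.le
        rw [ha_def] at hta
        calc ϖ₁ = ϕ * (2 * (ϖ₁ / (2 * ϕ))) := by field_simp
          _ ≤ ϕ * (2 * t) := by
            apply mul_le_mul_of_nonneg_left _ hϕ.le
            exact mul_le_mul_of_nonneg_left hta (by norm_num)
      have hle : ϕ * (2 * t) ≤ ϖ₂ := by
        have htb : t ≤ b := ht.2
        rw [hb_def] at htb
        calc ϕ * (2 * t) ≤ ϕ * (2 * (ϖ₂ / (2 * ϕ))) := by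
              apply mul_le_mul_of_nonneg_left _ hϕ.le
              exact mul_le_mul_of_nonneg_left htb (by norm_num)
          _ = ϖ₂ := by field_simp
      show g (ϕ * (2 * t)) * (t ^ (s - 1) * Real.exp (-t))
          = 2 * η * ϕ * (t ^ ((s + 1) - 1) * Real.exp (-t))
      rw [hg (ϕ * (2 * t)), if_neg (not_lt.mpr hge)]
      rcases lt_or_eq_of_le hle with hcase | hcase
      · rw [if_pos hcase]
        exact key t ht0
      · rw [if_neg (not_lt.mpr hcase.ge), ← hcase]
        exact key t ht0
    rw [hcongr, MeasureTheory.integral_const_mul]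
    congr 1
    have hsp := upperGamma_split (by positivity : (0:ℝ) < s + 1) ha hab.le
    linarith [hsp]
  -- piece 3: tail
  have hp3 : (∫ t in Set.Ioi b, K t) = η * ϖ₂ * upperGamma s b := by
    have hcongr : (∫ t in Set.Ioi b, K t)
        = ∫ t in Set.Ioi b, η * ϖ₂ * (t ^ (s - 1) * Real.exp (-t)) := by
      apply MeasureTheory.setIntegral_congr_fun measurableSet_Ioi
      intro t ht
      have htb : b < t := ht
      have hge : ϖ₂ ≤ ϕ * (2 * t) := by
        rw [hb_def] at htb
        calc ϖ₂ = ϕ * (2 * (ϖ₂ / (2 * ϕ))) := by field_simp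
          _ ≤ ϕ * (2 * t) := by
            apply mul_le_mul_of_nonneg_left _ hϕ.le
            exact mul_le_mul_of_nonneg_left htb.le (by norm_num)
      show g (ϕ * (2 * t)) * (t ^ (s - 1) * Real.exp (-t))
          = η * ϖ₂ * (t ^ (s - 1) * Real.exp (-t))
      rw [hg (ϕ * (2 * t)), if_neg (not_lt.mpr (le_trans h12.le hge)),
        if_neg (not_lt.mpr hge)]
    rw [hcongr, MeasureTheory.integral_const_mul]
    rfl
  -- assemble
  rw [step1, hsplit, hp1, hp2, hp3]
  have hone : (1 + φ / 2 : ℝ) = s + 1 := by rw [hs_def]; ring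
  rw [hone]
  ring
end

section
/- Let η > 0, 0 ≤ ϖ₁ < ϖ₂, and define g: ℝ → ℝ by g(x) = 0 for x < ϖ₁, g(x) = ηx for ϖ₁ ≤ x < ϖ₂, and g(x) = ηϖ₂ for x ≥ ϖ₂. Let m > 0, a > 0, ϕ > 0, and let V be a Gamma-distributed random variable with shape m and mean a, i.e., with density f(v) = ((m/a)^m/Γ(m))·v^{m−1}·e^{−mv/a} on v ≥ 0. Then E[g(ϕV)] = (η/Γ(m))·[(ϕa/m)·(Γ(m+1, mϖ₁/(ϕa)) − Γ(m+1, mϖ₂/(ϕa))) + ϖ₂·Γ(m, mϖ₂/(ϕa))], where Γ(a, x) = ∫_x^∞ t^{a−1} e^{−t} dt is the upper incomplete gamma function and Γ(m) = Γ(m, 0). -/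
open MeasureTheory Real

/-! Substituting `t = m v / a` turns the Gamma density into the Euler kernel `t^{m-1} e^{-t} / Γ(m)`
and `g(ϕ v)` into the transfer function with gain `η ϕ a / m` and thresholds rescaled by `m / (ϕ a)`.
Splitting `(0, ∞)` at the two thresholds, the integrand vanishes below the first, equals
`t^m e^{-t}` up to the gain between them (a difference of `Γ(m + 1, ·)`), and is a constant
multiple of the kernel above the second (a multiple of `Γ(m, ·)`). -/

open Set

lemma integrableOn_rpow_mul_exp_neg_Ioi {p x : ℝ} (hp : 0 < p) (hx : 0 ≤ x) :
    IntegrableOn (fun t : ℝ => t ^ (p - 1) * exp (-t)) (Ioi x) :=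
  ((GammaIntegral_convergent hp).congr_fun (fun _ _ => mul_comm _ _) measurableSet_Ioi).mono_set
    (Ioi_subset_Ioi hx)

lemma upperGamma_sub_upperGamma {p x y : ℝ} (hp : 0 < p) (hx : 0 ≤ x) (hxy : x ≤ y) :
    upperGamma p x - upperGamma p y = ∫ t in x..y, t ^ (p - 1) * exp (-t) :=
  intervalIntegral.integral_Ioi_sub_Ioi (integrableOn_rpow_mul_exp_neg_Ioi hp hx) hxy

noncomputable def ehTransfer (η ϖ₁ ϖ₂ x : ℝ) : ℝ :=
  if x < ϖ₁ then 0 else if x < ϖ₂ then η * x else η * ϖ₂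

lemma ehTransfer_mul (η ϖ₁ ϖ₂ : ℝ) {b : ℝ} (hb : 0 < b) (t : ℝ) :
    ehTransfer η ϖ₁ ϖ₂ (b * t) = ehTransfer (η * b) (ϖ₁ / b) (ϖ₂ / b) t := by
  simp only [ehTransfer, lt_div_iff₀' hb]
  split_ifs <;> field_simp

lemma measurable_ehTransfer (η ϖ₁ ϖ₂ : ℝ) : Measurable (ehTransfer η ϖ₁ ϖ₂) :=
  Measurable.ite measurableSet_Iio measurable_const
    (Measurable.ite measurableSet_Iio (measurable_const.mul measurable_id) measurable_const)

lemma abs_ehTransfer_le (η ϖ₁ ϖ₂ : ℝ) {x : ℝ} (hx : 0 ≤ x) :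
    |ehTransfer η ϖ₁ ϖ₂ x| ≤ |η * ϖ₂| := by
  unfold ehTransfer
  split_ifs with _ h₂
  · rw [abs_zero]; positivity
  · rw [abs_mul, abs_mul]
    exact mul_le_mul_of_nonneg_left (abs_le_abs_of_nonneg hx h₂.le) (abs_nonneg η)
  · rfl

lemma integrableOn_ehTransfer_mul_rpow_mul_exp_neg {p : ℝ} (hp : 0 < p) (η ϖ₁ ϖ₂ : ℝ) :
    IntegrableOn (fun t => ehTransfer η ϖ₁ ϖ₂ t * (t ^ (p - 1) * exp (-t))) (Ioi 0) := by
  refine (integrableOn_rpow_mul_exp_neg_Ioi hp le_rfl).bdd_mul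
    (measurable_ehTransfer η ϖ₁ ϖ₂).aestronglyMeasurable (c := |η * ϖ₂|) ?_
  filter_upwards [ae_restrict_mem measurableSet_Ioi] with t ht
  exact abs_ehTransfer_le η ϖ₁ ϖ₂ (le_of_lt ht)

theorem integral_ehTransfer_mul_rpow_mul_exp_neg {p : ℝ} (hp : 0 < p) (η : ℝ) {x₁ x₂ : ℝ}
    (h₁ : 0 ≤ x₁) (h₁₂ : x₁ ≤ x₂) :
    ∫ t in Ioi 0, ehTransfer η x₁ x₂ t * (t ^ (p - 1) * exp (-t))
      = η * ((upperGamma (p + 1) x₁ - upperGamma (p + 1) x₂) + x₂ * upperGamma p x₂) := by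
  set f := fun t => ehTransfer η x₁ x₂ t * (t ^ (p - 1) * exp (-t))
  have hf := integrableOn_ehTransfer_mul_rpow_mul_exp_neg hp η x₁ x₂
  have below : ∫ t in (0 : ℝ)..x₁, f t = 0 := by
    rw [intervalIntegral.integral_of_le h₁, integral_Ioc_eq_integral_Ioo]
    refine setIntegral_eq_zero_of_forall_eq_zero fun t ht => ?_
    simp [f, ehTransfer, ht.2]
  have linear : ∫ t in x₁..x₂, f t
      = η * (upperGamma (p + 1) x₁ - upperGamma (p + 1) x₂) := by
    rw [upperGamma_sub_upperGamma (by linarith) h₁ h₁₂, ← intervalIntegral.integral_const_mul,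
      intervalIntegral.integral_of_le h₁₂, intervalIntegral.integral_of_le h₁₂,
      integral_Ioc_eq_integral_Ioo, integral_Ioc_eq_integral_Ioo]
    refine setIntegral_congr_fun measurableSet_Ioo fun t ht => ?_
    have ht₀ : 0 < t := h₁.trans_lt ht.1
    simp only [f, ehTransfer, if_neg (not_lt.mpr ht.1.le), if_pos ht.2, add_sub_cancel_right,
      rpow_sub_one ht₀.ne']
    field_simp
  have saturated : ∫ t in Ioi x₂, f t = η * x₂ * upperGamma p x₂ := by
    rw [upperGamma, ← integral_const_mul]
    refine setIntegral_congr_fun measurableSet_Ioi fun t (ht : x₂ < t) => ?_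
    simp only [f, ehTransfer, if_neg (not_lt.mpr (h₁₂.trans ht.le)), if_neg (not_lt.mpr ht.le),
      mul_assoc]
  rw [← intervalIntegral.integral_interval_add_Ioi hf (hf.mono_set (Ioi_subset_Ioi h₁)),
    ← intervalIntegral.integral_interval_add_Ioi (hf.mono_set (Ioi_subset_Ioi h₁))
      (hf.mono_set (Ioi_subset_Ioi (h₁.trans h₁₂))), below, linear, saturated]
  ring

theorem setIntegral_mul_gammaDensity {m a : ℝ} (hm : 0 < m) (ha : 0 < a) (h : ℝ → ℝ) :
    ∫ v in Ioi 0, h v * ((m / a) ^ m / Gamma m * v ^ (m - 1) * exp (-(m * v / a)))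
      = (Gamma m)⁻¹ * ∫ t in Ioi 0, h (a / m * t) * (t ^ (m - 1) * exp (-t)) := by
  have hc : 0 < m / a := by positivity
  have substitution := integral_comp_mul_left_Ioi'
    (fun t => h (a / m * t) * (t ^ (m - 1) * exp (-t))) 0 hc
  rw [mul_zero, smul_eq_mul] at substitution
  rw [← substitution, ← integral_const_mul, ← integral_const_mul]
  refine setIntegral_congr_fun measurableSet_Ioi fun v hv => ?_
  have cancel : a / m * (m / a * v) = v := by field_simp
  rw [cancel, mul_rpow hc.le (le_of_lt hv), rpow_sub_one hc.ne']
  field_simp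

theorem mean_g_gamma_general (η ϖ₁ ϖ₂ : ℝ) (h1 : 0 ≤ ϖ₁) (h12 : ϖ₁ < ϖ₂)
    (g : ℝ → ℝ)
    (hg : ∀ x, g x = if x < ϖ₁ then 0 else if x < ϖ₂ then η * x else η * ϖ₂)
    (m a ϕ : ℝ) (hm : 0 < m) (ha : 0 < a) (hϕ : 0 < ϕ) :
    ∫ v in Set.Ioi (0 : ℝ),
        g (ϕ * v) * ((m / a) ^ m / Real.Gamma m * v ^ (m - 1) * Real.exp (-(m * v / a)))
      = (η / Real.Gamma m)
        * ((ϕ * a / m) * (upperGamma (m + 1) (m * ϖ₁ / (ϕ * a))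
            - upperGamma (m + 1) (m * ϖ₂ / (ϕ * a)))
          + ϖ₂ * upperGamma m (m * ϖ₂ / (ϕ * a))) := by
  obtain rfl : g = ehTransfer η ϖ₁ ϖ₂ := funext hg
  have hb : 0 < ϕ * a / m := by positivity
  have rescale (ϖ : ℝ) : ϖ / (ϕ * a / m) = m * ϖ / (ϕ * a) := by field_simp
  have hg_rescaled (t : ℝ) : ehTransfer η ϖ₁ ϖ₂ (ϕ * (a / m * t))
      = ehTransfer (η * (ϕ * a / m)) (m * ϖ₁ / (ϕ * a)) (m * ϖ₂ / (ϕ * a)) t := by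
    rw [← rescale, ← rescale, ← ehTransfer_mul _ _ _ hb, mul_div_assoc, mul_assoc]
  rw [setIntegral_mul_gammaDensity hm ha (fun v => ehTransfer η ϖ₁ ϖ₂ (ϕ * v))]
  simp only [hg_rescaled]
  rw [integral_ehTransfer_mul_rpow_mul_exp_neg hm _ (by positivity) (by gcongr)]
  field_simp

/-- With `g` the sensitivity/saturation EH transfer function and `V`
Gamma-distributed with shape `m` and mean `a` (density
`((m/a)^m/Γ(m)) v^{m−1} e^{−mv/a}` on `v ≥ 0`), for `ϕ > 0`,
`E[g(ϕV)] = (η/Γ(m))[(ϕa/m)(Γ(m+1, mϖ₁/(ϕa)) − Γ(m+1, mϖ₂/(ϕa))) + ϖ₂Γ(m, mϖ₂/(ϕa))]`. -/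
theorem mean_g_gamma (η ϖ₁ ϖ₂ : ℝ) (hη : 0 < η) (h1 : 0 ≤ ϖ₁) (h12 : ϖ₁ < ϖ₂)
    (g : ℝ → ℝ)
    (hg : ∀ x, g x = if x < ϖ₁ then 0 else if x < ϖ₂ then η * x else η * ϖ₂)
    (m a ϕ : ℝ) (hm : 0 < m) (ha : 0 < a) (hϕ : 0 < ϕ) :
    ∫ v in Set.Ioi (0 : ℝ),
        g (ϕ * v) * ((m / a) ^ m / Real.Gamma m * v ^ (m - 1) * Real.exp (-(m * v / a)))
      = (η / Real.Gamma m)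
        * ((ϕ * a / m) * (upperGamma (m + 1) (m * ϖ₁ / (ϕ * a))
            - upperGamma (m + 1) (m * ϖ₂ / (ϕ * a)))
          + ϖ₂ * upperGamma m (m * ϖ₂ / (ϕ * a))) :=
  mean_g_gamma_general η ϖ₁ ϖ₂ h1 h12 g hg m a ϕ hm ha hϕ
end

section
/- Let M ≥ 2 and κ ≥ 0, and define V(δ) = ((M + 2κδ)M² − 2δM(1+κ) + δ²)/(M³(M−1)(1+κ)²) for δ ∈ ℝ. Then V is a convex function of δ, and setting δ* = M·(1 − min(κ(M−1), 1)), one has V(δ) ≥ V(δ*) for every δ ≥ 0; i.e., over the admissible range δ ≥ 0, the variance of the harvested energy under the Switching-Antennas scheme is minimized at δ = M(1 − min(κ(M−1), 1)). -/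
/-!
The numerator of `V` is a monic quadratic in `δ`: it equals `(δ - δ₀)² + (M³ - δ₀²)` with
vertex `δ₀ = M(1 - κ(M - 1))`, and the denominator is positive since `M ≥ 2`. So `V` is convex,
and on `δ ≥ 0` it is minimized at the projection `max δ₀ 0` of the vertex onto `[0, ∞)`,
which is `M(1 - min (κ(M - 1)) 1)`.
-/

open Set

lemma convexOn_sq_sub_add_div (a c : ℝ) {D : ℝ} (hD : 0 < D) :
    ConvexOn ℝ univ fun x : ℝ => ((x - a) ^ 2 + c) / D := by
  have hsq : ConvexOn ℝ univ fun x : ℝ => (x + -a) ^ 2 := by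
    simpa [Function.comp_def] using (even_two.convexOn_pow (𝕜 := ℝ)).translate_left (-a)
  simpa [div_eq_inv_mul, sub_eq_add_neg] using
    (hsq.add_const c).smul (inv_nonneg.mpr hD.le)

lemma sq_max_zero_sub_le (a : ℝ) {x : ℝ} (hx : 0 ≤ x) : (max a 0 - a) ^ 2 ≤ (x - a) ^ 2 := by
  rcases le_total a 0 with ha | ha
  · rw [max_eq_right ha]
    nlinarith
  · simpa [max_eq_left ha] using sq_nonneg (x - a)

lemma mul_one_sub_min_one {M : ℝ} (hM : 0 ≤ M) (t : ℝ) :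
    M * (1 - min t 1) = max (M * (1 - t)) 0 := by
  rw [← max_sub_sub_left, sub_self, mul_max_of_nonneg _ _ hM, mul_zero]

/-- For `M ≥ 2` and `κ ≥ 0`, the Switching-Antennas variance function
`V(δ) = ((M + 2κδ)M² − 2δM(1+κ) + δ²)/(M³(M−1)(1+κ)²)` is convex in `δ`, and over
`δ ≥ 0` it is minimized at `δ* = M(1 − min(κ(M−1), 1))`. -/
theorem SA_variance_convex_min (M : ℕ) (hM : 2 ≤ M) (κ : ℝ) (hκ : 0 ≤ κ)
    (V : ℝ → ℝ)
    (hV : ∀ δ : ℝ, V δ = (((M : ℝ) + 2 * κ * δ) * (M : ℝ) ^ 2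
      - 2 * δ * M * (1 + κ) + δ ^ 2) / ((M : ℝ) ^ 3 * ((M : ℝ) - 1) * (1 + κ) ^ 2)) :
    ConvexOn ℝ Set.univ V ∧
    ∀ δ : ℝ, 0 ≤ δ → V ((M : ℝ) * (1 - min (κ * ((M : ℝ) - 1)) 1)) ≤ V δ := by
  have hM2 : (2 : ℝ) ≤ M := by exact_mod_cast hM
  have hD : 0 < (M : ℝ) ^ 3 * ((M : ℝ) - 1) * (1 + κ) ^ 2 := by
    exact mul_pos (mul_pos (by positivity) (by linarith)) (by positivity)
  set δ₀ := (M : ℝ) * (1 - κ * ((M : ℝ) - 1))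
  have hV_vertex : V = fun δ => ((δ - δ₀) ^ 2 + ((M : ℝ) ^ 3 - δ₀ ^ 2)) /
      ((M : ℝ) ^ 3 * ((M : ℝ) - 1) * (1 + κ) ^ 2) := by
    funext δ
    rw [hV]
    ring
  subst hV_vertex
  refine ⟨convexOn_sq_sub_add_div _ _ hD, fun δ hδ => ?_⟩
  rw [mul_one_sub_min_one (by positivity)]
  beta_reduce
  gcongr (?_ + _) / _
  exact sq_max_zero_sub_le δ₀ hδ
end

section
/- Let M ≥ 1 and 0 < δ ≤ M², and define f(κ) = δ·(δ + 2κM²)/(M²(1+κ)²) for κ ≥ 0, and κ₁* = max(1 − δ/M², 0). Then f is monotonically increasing on [0, κ₁*] and monotonically decreasing on [κ₁*, ∞); in particular f(κ) ≤ f(κ₁*) for all κ ≥ 0. That is, the variance of the harvested energy under the All-Antennas scheme, as a function of the Rician factor κ, attains its maximum at κ = 1 − δ/M² (or at κ = 0 if δ = M²). -/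
/-- For `M ≥ 1`, `0 < δ ≤ M²`, the All-Antennas variance profile
`f(κ) = δ(δ + 2κM²)/(M²(1+κ)²)` is increasing on `[0, κ₁*]` and decreasing on
`[κ₁*, ∞)`, where `κ₁* = max(1 − δ/M², 0)`; in particular `f(κ) ≤ f(κ₁*)` for all
`κ ≥ 0`. -/
theorem AA_variance_vs_kappa (M : ℕ) (hM : 1 ≤ M) (δ : ℝ)
    (hδ0 : 0 < δ) (hδM : δ ≤ (M : ℝ) ^ 2)
    (f : ℝ → ℝ)
    (hf : ∀ κ : ℝ, f κ = δ * (δ + 2 * κ * (M : ℝ) ^ 2) / ((M : ℝ) ^ 2 * (1 + κ) ^ 2))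
    (κ₁ : ℝ) (hκ₁ : κ₁ = max (1 - δ / (M : ℝ) ^ 2) 0) :
    MonotoneOn f (Set.Icc 0 κ₁) ∧
    AntitoneOn f (Set.Ici κ₁) ∧
    ∀ κ : ℝ, 0 ≤ κ → f κ ≤ f κ₁ := by
  set m : ℝ := (M : ℝ) ^ 2 with hm
  have hm0 : 0 < m := by positivity
  have hsub : 0 ≤ 1 - δ / m := by
    have : δ / m ≤ 1 := (div_le_one hm0).2 hδM
    linarith
  have hκ₁' : κ₁ = 1 - δ / m := by rw [hκ₁, max_eq_left hsub]
  have hmκ : m * κ₁ = m - δ := by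
    rw [hκ₁']; field_simp
  have hκ₁0 : 0 ≤ κ₁ := by rw [hκ₁']; exact hsub
  have hmono : MonotoneOn f (Set.Icc 0 κ₁) := by
    intro a ha b hb hab
    obtain ⟨ha0, haκ⟩ := ha
    obtain ⟨hb0, hbκ⟩ := hb
    have hma : m * a ≤ m - δ := by
      have := mul_le_mul_of_nonneg_left haκ hm0.le
      linarith [hmκ ▸ this]
    have hmb : m * b ≤ m - δ := by
      have := mul_le_mul_of_nonneg_left hbκ hm0.le
      linarith [hmκ ▸ this]
    rw [hf a, hf b]
    have h1a : (0:ℝ) < 1 + a := by linarith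
    have h1b : (0:ℝ) < 1 + b := by linarith
    rw [div_le_div_iff₀ (by positivity) (by positivity)]
    nlinarith [mul_nonneg hb0 (sub_nonneg.2 hma), mul_nonneg ha0 (sub_nonneg.2 hmb),
      mul_nonneg (sub_nonneg.2 hab) hδ0.le, mul_nonneg (sub_nonneg.2 hma) (sub_nonneg.2 hmb),
      mul_nonneg (mul_nonneg (sub_nonneg.2 hab) hδ0.le) hm0.le,
      mul_nonneg (mul_nonneg (sub_nonneg.2 hab) hδ0.le) (sub_nonneg.2 hma),
      mul_nonneg (mul_nonneg (sub_nonneg.2 hab) hδ0.le) (sub_nonneg.2 hmb),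
      mul_nonneg (mul_nonneg (sub_nonneg.2 hab) hδ0.le) (mul_nonneg ha0 hb0),
      mul_pos hδ0 hm0, mul_nonneg ha0 hb0]
  have hanti : AntitoneOn f (Set.Ici κ₁) := by
    intro a ha b hb hab
    have ha0 : 0 ≤ a := le_trans hκ₁0 ha
    have hb0 : 0 ≤ b := le_trans hκ₁0 hb
    have hma : m - δ ≤ m * a := by
      have := mul_le_mul_of_nonneg_left (Set.mem_Ici.1 ha) hm0.le
      linarith [hmκ ▸ this]
    have hmb : m - δ ≤ m * b := by
      have := mul_le_mul_of_nonneg_left (Set.mem_Ici.1 hb) hm0.le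
      linarith [hmκ ▸ this]
    rw [hf a, hf b]
    have h1a : (0:ℝ) < 1 + a := by linarith
    have h1b : (0:ℝ) < 1 + b := by linarith
    rw [div_le_div_iff₀ (by positivity) (by positivity)]
    nlinarith [mul_nonneg (sub_nonneg.2 hma) (sub_nonneg.2 hmb),
      mul_nonneg (sub_nonneg.2 hab) hδ0.le,
      mul_nonneg (mul_nonneg (sub_nonneg.2 hab) hδ0.le) hm0.le,
      mul_nonneg (mul_nonneg (sub_nonneg.2 hab) hδ0.le) (sub_nonneg.2 hma),
      mul_nonneg (mul_nonneg (sub_nonneg.2 hab) hδ0.le) (sub_nonneg.2 hmb),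
      mul_nonneg (mul_nonneg (sub_nonneg.2 hab) hδ0.le) (mul_nonneg ha0 hb0),
      mul_pos hδ0 hm0, mul_nonneg ha0 hb0]
  refine ⟨hmono, hanti, fun κ hκ => ?_⟩
  rcases le_or_gt κ κ₁ with h | h
  · exact hmono ⟨hκ, h⟩ ⟨hκ₁0, le_refl _⟩ h
  · exact hanti (Set.mem_Ici.2 (le_refl _)) (Set.mem_Ici.2 h.le) h.le
end

section
/- Let M ≥ 2 and M ≤ δ ≤ M², and define f(κ) = ((M + 2κδ)M² − 2δM(1+κ) + δ²)/((1+κ)²) for κ ≥ 0, and κ₂* = (δ − M)(M² − δ)/(δM(M−1)) (which is ≥ 0 in this range of δ). Then f is monotonically increasing on [0, κ₂*] and monotonically decreasing on [κ₂*, ∞); in particular f(κ) ≤ f(κ₂*) for all κ ≥ 0. That is, the variance of the harvested energy under the Switching-Antennas (and under the optimal beamforming AA-CSI) scheme, as a function of the Rician factor κ, attains its maximum at κ = (δ−M)(M²−δ)/(δM(M−1)). -/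
/-!
Up to the positive factor `δM(M-1)`, `f(κ)` is `(2κ + 1 - κ₂)/(1+κ)²`, whose difference quotient
has the sign of `(1+a)(κ₂-b) + (1+b)(κ₂-a)`: nonnegative when `a ≤ b ≤ κ₂` and nonpositive when
`κ₂ ≤ a ≤ b`.
-/

noncomputable def peakProfile (c κ : ℝ) : ℝ := (2 * κ + 1 - c) / (1 + κ) ^ 2

lemma peakProfile_sub {c a b : ℝ} (ha : 1 + a ≠ 0) (hb : 1 + b ≠ 0) :
    peakProfile c b - peakProfile c a =
      (b - a) * ((1 + a) * (c - b) + (1 + b) * (c - a)) / ((1 + a) ^ 2 * (1 + b) ^ 2) := by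
  unfold peakProfile
  field_simp
  ring

lemma monotoneOn_peakProfile (c : ℝ) : MonotoneOn (peakProfile c) (Set.Ioc (-1) c) := by
  rintro a ⟨ha, hac⟩ b ⟨hb, hbc⟩ hab
  have ha' : 0 < 1 + a := by linarith
  have hb' : 0 < 1 + b := by linarith
  rw [← sub_nonneg, peakProfile_sub ha'.ne' hb'.ne']
  have hsign : 0 ≤ (1 + a) * (c - b) + (1 + b) * (c - a) := by nlinarith
  exact div_nonneg (mul_nonneg (sub_nonneg.2 hab) hsign) (by positivity)

lemma antitoneOn_peakProfile {c : ℝ} (hc : -1 < c) : AntitoneOn (peakProfile c) (Set.Ici c) := by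
  rintro a (hca : c ≤ a) b (hcb : c ≤ b) hab
  have ha' : 0 < 1 + a := by linarith
  have hb' : 0 < 1 + b := by linarith
  rw [← sub_nonpos, peakProfile_sub ha'.ne' hb'.ne']
  have hsign : (1 + a) * (c - b) + (1 + b) * (c - a) ≤ 0 := by nlinarith
  exact div_nonpos_of_nonpos_of_nonneg (mul_nonpos_of_nonneg_of_nonpos (sub_nonneg.2 hab) hsign)
    (by positivity)

/-- For `M ≥ 2` and `M ≤ δ ≤ M²`, the (SA / AA-CSI) variance profile
`f(κ) = ((M + 2κδ)M² − 2δM(1+κ) + δ²)/(1+κ)²` is increasing on `[0, κ₂*]` and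
decreasing on `[κ₂*, ∞)`, where `κ₂* = (δ−M)(M²−δ)/(δM(M−1)) ≥ 0`; in particular
`f(κ) ≤ f(κ₂*)` for all `κ ≥ 0`. -/
theorem SA_variance_vs_kappa (M : ℕ) (hM : 2 ≤ M) (δ : ℝ)
    (hδ1 : (M : ℝ) ≤ δ) (hδ2 : δ ≤ (M : ℝ) ^ 2)
    (f : ℝ → ℝ)
    (hf : ∀ κ : ℝ, f κ = (((M : ℝ) + 2 * κ * δ) * (M : ℝ) ^ 2
      - 2 * δ * (M : ℝ) * (1 + κ) + δ ^ 2) / (1 + κ) ^ 2)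
    (κ₂ : ℝ) (hκ₂ : κ₂ = (δ - (M : ℝ)) * ((M : ℝ) ^ 2 - δ) / (δ * (M : ℝ) * ((M : ℝ) - 1))) :
    0 ≤ κ₂ ∧
    MonotoneOn f (Set.Icc 0 κ₂) ∧
    AntitoneOn f (Set.Ici κ₂) ∧
    ∀ κ : ℝ, 0 ≤ κ → f κ ≤ f κ₂ := by
  have hMR : (2 : ℝ) ≤ M := by exact_mod_cast hM
  have hscale : 0 < δ * M * (M - 1) := by nlinarith
  have hκ₂_nonneg : 0 ≤ κ₂ := hκ₂ ▸ div_nonneg (mul_nonneg (by linarith) (by linarith)) hscale.le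
  have hκ₂_mul : κ₂ * (δ * M * (M - 1)) = (δ - M) * (M ^ 2 - δ) := by
    rw [hκ₂]
    exact div_mul_cancel₀ _ hscale.ne'
  have hf_eq : f = fun κ => δ * M * (M - 1) * peakProfile κ₂ κ := by
    funext κ
    rw [hf, peakProfile, mul_div_assoc']
    congr 1
    linear_combination hκ₂_mul
  have hmono : MonotoneOn f (Set.Icc 0 κ₂) := hf_eq ▸
    (monotone_mul_left_of_nonneg hscale.le).comp_monotoneOn
      ((monotoneOn_peakProfile κ₂).mono fun _ hκ => ⟨by linarith [hκ.1], hκ.2⟩)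
  have hanti : AntitoneOn f (Set.Ici κ₂) := hf_eq ▸
    (monotone_mul_left_of_nonneg hscale.le).comp_antitoneOn (antitoneOn_peakProfile (by linarith))
  refine ⟨hκ₂_nonneg, hmono, hanti, fun κ hκ => ?_⟩
  rcases le_total κ κ₂ with h | h
  · exact hmono ⟨hκ, h⟩ ⟨hκ₂_nonneg, le_rfl⟩ h
  · exact hanti Set.self_mem_Ici h h
end
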